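/- (Corollary 2, Lyapunov stability of the zero solution; case f = 0.) Assume the improper integral ∫_τ^∞ α(ξ)·σ(ξ)^p·ν(ξ)^{1−p} dξ converges and sup_{t ≥ 0} ∫_0^t γ(ξ) dξ < ∞. Then for every ε > 0 there exists δ > 0 such that the following holds: for every u : ℝ → H that is continuous on [−τ, ∞), differentiable on [0, ∞) with derivative u̇, with t ↦ ‖u(t)‖ differentiable on [0, ∞), satisfying Re⟨u(t), u̇(t)⟩ ≤ γ(t)·‖u(t)‖² + α(t)·‖u(t)‖·‖u(t−τ)‖^p for all t ≥ 0, and for which there exists a nonnegative function h : ℝ → ℝ, continuous on [−τ, ∞), differentiable on [0, ∞), with h′(t) = γ(t)·h(t) + α(t)·h(t−τ)^p for all t ≥ 0 and h(t) = ‖u(t)‖ for t ∈ [−τ, 0]: if ‖u(t)‖ ≤ δ for all t ∈ [−τ, 0], then ‖u(t)‖ ≤ ε for all t ≥ 0. -/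

import Mathlib

/-!
Since `‖u‖ · (d/dt)‖u‖ = Re ⟪u, u̇⟫`, the norm `g = ‖u‖` satisfies
`g' ≤ γ g + α g(t - τ)^p` wherever it is positive, so a strict-barrier argument on the
successive intervals `[kτ, (k + 1)τ]` gives `‖u‖ ≤ h`. The rescaled function `y = ν h` has
`y' = α ν h(t - τ)^p ≥ 0`, and `ν(t) / ν(t - τ)^p = σ(t)^p ν(t)^(1-p)`, hence
`y(t) ≤ y(τ) + (sup y)^p ∫_τ^∞ α σ^p ν^(1-p)`. As `p > 1`, a continuity argument keeps `y`
below any small enough `B` once `h ≤ δ` on `[-τ, 0]`, and then `h = y / ν ≤ B e^M` where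
`M` bounds `∫_0^t γ`.
-/

open Real MeasureTheory Set Filter ComplexInnerProductSpace

/-- `ν(t) = exp(−∫₀ᵗ γ(ξ) dξ)`. -/
noncomputable def nu (γ : ℝ → ℝ) (t : ℝ) : ℝ := Real.exp (-∫ ξ in (0:ℝ)..t, γ ξ)

/-- `σ(t) = exp(−∫_{t−τ}^t γ(ξ) dξ)`. -/
noncomputable def sig (γ : ℝ → ℝ) (τ t : ℝ) : ℝ :=
  Real.exp (-∫ ξ in (t - τ)..t, γ ξ)

open Topology

theorem HasDerivWithinAt.norm_mul_eq_re_inner {H : Type*} [NormedAddCommGroup H]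
    [InnerProductSpace ℂ H] {u : ℝ → H} {u' : H} {n : ℝ} {s : Set ℝ} {x : ℝ}
    (hu : HasDerivWithinAt u u' s x) (hn : HasDerivWithinAt (‖u ·‖) n s x)
    (hs : UniqueDiffWithinAt ℝ s x) : ‖u x‖ * n = (⟪u x, u'⟫).re := by
  let _ := InnerProductSpace.rclikeToReal ℂ H
  have h₁ : HasDerivWithinAt (‖u ·‖ ^ 2) (2 * (⟪u x, u'⟫).re) s x := by
    simpa only [real_inner_eq_re_inner, RCLike.re_to_complex] using hu.norm_sq
  have h₂ : HasDerivWithinAt (‖u ·‖ ^ 2) (2 * ‖u x‖ * n) s x := by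
    simpa using hn.fun_pow 2
  linarith [hs.eq_deriv _ h₁ h₂]

theorem image_le_of_deriv_right_sub_mul_le {γ g g' h h' : ℝ → ℝ} {a b : ℝ}
    (hγ : ContinuousOn γ (Icc a b))
    (hgc : ContinuousOn g (Icc a b)) (hg : ∀ x ∈ Ico a b, HasDerivWithinAt g (g' x) (Ici x) x)
    (hhc : ContinuousOn h (Icc a b)) (hh : ∀ x ∈ Ico a b, HasDerivWithinAt h (h' x) (Ici x) x)
    (hh0 : ∀ x ∈ Ico a b, 0 ≤ h x) (ha : g a ≤ h a)
    (hgh : ∀ x ∈ Ico a b, 0 < g x → g' x - γ x * g x ≤ h' x - γ x * h x) :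
    ∀ x ∈ Icc a b, g x ≤ h x := by
  obtain ⟨K, hK⟩ : ∃ K, ∀ x ∈ Icc a b, γ x < K := by
    obtain ⟨C, hC⟩ := (isCompact_Icc.image_of_continuousOn hγ).bddAbove
    exact ⟨C + 1, fun x hx => (hC ⟨x, hx, rfl⟩).trans_lt (lt_add_one C)⟩
  intro x hx
  refine le_of_forall_pos_le_add fun ε hε => ?_
  -- `h + η e^{K(· - a)}` is a strict upper barrier for `g`, since `γ < K`
  set η := ε / exp (K * (x - a))
  have hη : 0 < η := by positivity
  have hbarrier := image_le_of_deriv_right_lt_deriv_boundary'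
    (B := fun y => h y + η * exp (K * (y - a))) (B' := fun y => h' y + η * exp (K * (y - a)) * K)
    hgc hg (by simpa using ha.trans (le_add_of_nonneg_right hη.le)) (hhc.add (by fun_prop))
    (fun y hy => (hh y hy).add <| by
      simpa [mul_assoc] using
        ((((hasDerivAt_id y).sub_const a).const_mul K).exp.const_mul η).hasDerivWithinAt)
    (fun y hy hcontact => by
      have hE : 0 < η * exp (K * (y - a)) := by positivity
      have hgy : 0 < g y := hcontact ▸ add_pos_of_nonneg_of_pos (hh0 y hy) hE
      have hγK := mul_lt_mul_of_pos_left (hK y (Ico_subset_Icc_self hy)) hE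
      have := hgh y hy hgy
      rw [hcontact] at this
      linarith)
    hx
  simpa [η, div_mul_cancel₀] using hbarrier

section Nu

variable {γ : ℝ → ℝ}

theorem nu_pos (γ : ℝ → ℝ) (t : ℝ) : 0 < nu γ t := exp_pos _

theorem nu_zero (γ : ℝ → ℝ) : nu γ 0 = 1 := by simp [nu]

theorem hasDerivAt_nu (hγ : Continuous γ) (t : ℝ) : HasDerivAt (nu γ) (-γ t * nu γ t) t :=
  (hγ.integral_hasStrictDerivAt 0 t).hasDerivAt.neg.exp.congr_deriv <| by
    simp only [nu, Pi.neg_apply]; ring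

theorem continuous_nu (hγ : Continuous γ) : Continuous (nu γ) :=
  continuous_iff_continuousAt.2 fun t => (hasDerivAt_nu hγ t).continuousAt

theorem nu_div_nu_sub_rpow (hγ : Continuous γ) (τ p t : ℝ) :
    nu γ t / nu γ (t - τ) ^ p = sig γ τ t ^ p * nu γ t ^ (1 - p) := by
  have hsplit : ∫ ξ in (t - τ)..t, γ ξ = (∫ ξ in (0:ℝ)..t, γ ξ) - ∫ ξ in (0:ℝ)..(t - τ), γ ξ :=
    (intervalIntegral.integral_interval_sub_left (hγ.intervalIntegrable _ _)
      (hγ.intervalIntegrable _ _)).symm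
  simp only [nu, sig, ← exp_mul, ← exp_sub, ← exp_add, hsplit]
  ring_nf

theorem mul_sig_rpow_mul_nu_rpow_nonneg {α : ℝ → ℝ} (hα : ∀ t, 0 ≤ α t) (τ p ξ : ℝ) :
    0 ≤ α ξ * sig γ τ ξ ^ p * nu γ ξ ^ (1 - p) :=
  mul_nonneg (mul_nonneg (hα ξ) (rpow_nonneg (exp_pos _).le _)) (rpow_nonneg (nu_pos γ ξ).le _)

theorem exp_neg_le_nu {M : ℝ} (hM : ∀ t, 0 ≤ t → ∫ ξ in (0:ℝ)..t, γ ξ ≤ M) {t : ℝ} (ht : 0 ≤ t) :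
    exp (-M) ≤ nu γ t :=
  exp_le_exp.2 (neg_le_neg (hM t ht))

end Nu

theorem ContinuousOn.forall_lt_of_bootstrap {y : ℝ → ℝ} {a B : ℝ} (hy : ContinuousOn y (Ici a))
    (hboot : ∀ t, a ≤ t → (∀ s ∈ Ico a t, y s ≤ B) → y t < B) : ∀ t, a ≤ t → y t < B := by
  intro t ht
  by_contra! hBt
  have hS : IsClosed (Icc a t ∩ y ⁻¹' Ici B) :=
    (hy.mono Icc_subset_Ici_self).preimage_isClosed_of_isClosed isClosed_Icc isClosed_Ici
  obtain ⟨t₀, ⟨⟨ht₀a, ht₀t⟩, ht₀B⟩, hfirst⟩ :=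
    (isCompact_Icc.of_isClosed_subset hS inter_subset_left).exists_isLeast ⟨t, ⟨ht, le_rfl⟩, hBt⟩
  refine (hboot t₀ ht₀a fun s hs => ?_).not_ge ht₀B
  by_contra! hs'
  exact hs.2.not_ge (hfirst ⟨⟨hs.1, hs.2.le.trans ht₀t⟩, hs'.le⟩)

structure IsDelaySolution (τ p : ℝ) (γ α h : ℝ → ℝ) : Prop where
  nonneg : ∀ t, -τ ≤ t → 0 ≤ h t
  continuousOn : ContinuousOn h (Ici (-τ))
  hasDerivWithinAt :
    ∀ t, 0 ≤ t → HasDerivWithinAt h (γ t * h t + α t * h (t - τ) ^ p) (Ici 0) t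

namespace IsDelaySolution

variable {τ p : ℝ} {γ α h : ℝ → ℝ}

theorem le_of_subsolution (hsol : IsDelaySolution τ p γ α h) (hτ : 0 < τ) (hp : 0 ≤ p)
    (hγ : Continuous γ) (hα : ∀ t, 0 ≤ α t) {g g' : ℝ → ℝ} (hg0 : ∀ t, 0 ≤ g t)
    (hgc : ContinuousOn g (Ici 0)) (hg : ∀ t, 0 ≤ t → HasDerivWithinAt g (g' t) (Ici 0) t)
    (hg' : ∀ t, 0 ≤ t → 0 < g t → g' t ≤ γ t * g t + α t * g (t - τ) ^ p)
    (hinit : ∀ t, -τ ≤ t → t ≤ 0 → g t ≤ h t) :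
    ∀ t, -τ ≤ t → g t ≤ h t := by
  -- method of steps: compare on `[kτ, (k + 1)τ]`, where the delayed terms are already ordered
  have hstep : ∀ k : ℕ, ∀ t, -τ ≤ t → t ≤ k * τ → g t ≤ h t := by
    intro k
    induction k with
    | zero => simpa using hinit
    | succ k ih =>
      intro t ht htk
      rcases le_or_gt t (k * τ) with hle | hlt
      · exact ih t ht hle
      have hk : 0 ≤ (k : ℝ) * τ := by positivity
      have hsub : Icc ((k : ℝ) * τ) (k * τ + τ) ⊆ Ici 0 := fun x hx => hk.trans hx.1
      have hderiv {f f' : ℝ → ℝ} (hf : ∀ t, 0 ≤ t → HasDerivWithinAt f (f' t) (Ici 0) t) :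
          ∀ x ∈ Ico ((k : ℝ) * τ) (k * τ + τ), HasDerivWithinAt f (f' x) (Ici x) x :=
        fun x hx => (hf x (hk.trans hx.1)).mono (Ici_subset_Ici.2 (hk.trans hx.1))
      refine image_le_of_deriv_right_sub_mul_le hγ.continuousOn (hgc.mono hsub) (hderiv hg)
        (hsol.continuousOn.mono (hsub.trans (Ici_subset_Ici.2 (by linarith))))
        (hderiv hsol.hasDerivWithinAt) (fun x hx => hsol.nonneg x (by linarith [hk.trans hx.1]))
        (ih _ (by linarith) le_rfl) (fun x hx hgx => ?_) t ⟨hlt.le, by push_cast at htk; linarith⟩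
      have hdelay : g (x - τ) ≤ h (x - τ) := ih _ (by linarith [hk.trans hx.1]) (by linarith [hx.2])
      have := mul_le_mul_of_nonneg_left (rpow_le_rpow (hg0 _) hdelay hp) (hα x)
      linarith [hg' x (hk.trans hx.1) hgx]
  intro t ht
  obtain ⟨k, hk⟩ := exists_nat_ge (t / τ)
  exact hstep k t ht (by rwa [div_le_iff₀ hτ] at hk)

theorem continuousOn_delay_term (hsol : IsDelaySolution τ p γ α h) (hp : 0 ≤ p)
    (hγ : Continuous γ) (hα : Continuous α) :
    ContinuousOn (fun s => α s * nu γ s * h (s - τ) ^ p) (Ici 0) :=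
  (hα.mul (continuous_nu hγ)).continuousOn.mul <|
    (hsol.continuousOn.comp (continuous_sub_right τ).continuousOn fun s hs => by
      simp only [mem_Ici] at hs ⊢; linarith).rpow_const fun _ _ => Or.inr hp

theorem nu_mul_sub_nu_mul (hsol : IsDelaySolution τ p γ α h) (hτ : 0 ≤ τ) (hp : 0 ≤ p)
    (hγ : Continuous γ) (hα : Continuous α) {a b : ℝ} (ha : 0 ≤ a) (hab : a ≤ b) :
    nu γ b * h b - nu γ a * h a = ∫ s in a..b, α s * nu γ s * h (s - τ) ^ p := by
  have hsub : Icc a b ⊆ Ici 0 := fun s hs => ha.trans hs.1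
  refine (intervalIntegral.integral_eq_sub_of_hasDeriv_right_of_le hab
    ((continuous_nu hγ).continuousOn.mul
      (hsol.continuousOn.mono (hsub.trans (Ici_subset_Ici.2 (by linarith)))))
    (fun s hs => ?_)
    (((hsol.continuousOn_delay_term hp hγ hα).mono hsub).intervalIntegrable_of_Icc hab)).symm
  have hs0 : 0 ≤ s := ha.trans hs.1.le
  exact (((hasDerivAt_nu hγ s).hasDerivWithinAt.mul (hsol.hasDerivWithinAt s hs0)).mono
    fun r hr => hs0.trans (le_of_lt hr)).congr_deriv (by ring)

theorem nu_mul_le_nu_mul (hsol : IsDelaySolution τ p γ α h) (hτ : 0 ≤ τ) (hp : 0 ≤ p)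
    (hγ : Continuous γ) (hαc : Continuous α) (hα : ∀ t, 0 ≤ α t) {a b : ℝ} (ha : 0 ≤ a)
    (hab : a ≤ b) : nu γ a * h a ≤ nu γ b * h b := by
  have hpos : 0 ≤ ∫ s in a..b, α s * nu γ s * h (s - τ) ^ p :=
    intervalIntegral.integral_nonneg hab fun s hs =>
      mul_nonneg (mul_nonneg (hα s) (nu_pos γ s).le)
        (rpow_nonneg (hsol.nonneg _ (by linarith [ha.trans hs.1])) p)
  linarith [hsol.nu_mul_sub_nu_mul hτ hp hγ hαc ha hab]

theorem nu_mul_le_of_le_on_Icc (hsol : IsDelaySolution τ p γ α h) (hτ : 0 ≤ τ) (hp : 0 ≤ p)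
    (hγ : Continuous γ) (hαc : Continuous α) (hα : ∀ t, 0 ≤ α t) {δ : ℝ}
    (hδ : ∀ t ∈ Icc (-τ) 0, h t ≤ δ) {t : ℝ} (ht : t ∈ Icc 0 τ) :
    nu γ t * h t ≤ δ + δ ^ p * ∫ s in (0:ℝ)..τ, α s * nu γ s := by
  have hw : ∀ s ∈ Icc 0 τ, α s * nu γ s * h (s - τ) ^ p ≤ δ ^ p * (α s * nu γ s) := by
    intro s hs
    have hmem : s - τ ∈ Icc (-τ) 0 := ⟨by linarith [hs.1], by linarith [hs.2]⟩
    have := rpow_le_rpow (hsol.nonneg _ hmem.1) (hδ _ hmem) hp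
    have := mul_le_mul_of_nonneg_left this (mul_nonneg (hα s) (nu_pos γ s).le)
    linarith
  calc nu γ t * h t ≤ nu γ τ * h τ := hsol.nu_mul_le_nu_mul hτ hp hγ hαc hα ht.1 ht.2
    _ = nu γ 0 * h 0 + ∫ s in (0:ℝ)..τ, α s * nu γ s * h (s - τ) ^ p := by
      linarith [hsol.nu_mul_sub_nu_mul hτ hp hγ hαc le_rfl hτ]
    _ ≤ δ + ∫ s in (0:ℝ)..τ, δ ^ p * (α s * nu γ s) := by
      gcongr ?_ + ?_
      · simpa [nu_zero] using hδ 0 ⟨by linarith, le_rfl⟩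
      · exact intervalIntegral.integral_mono_on hτ
          (((hsol.continuousOn_delay_term hp hγ hαc).mono
            fun s hs => hs.1).intervalIntegrable_of_Icc hτ)
          ((continuous_const.mul (hαc.mul (continuous_nu hγ))).intervalIntegrable _ _) hw
    _ = δ + δ ^ p * ∫ s in (0:ℝ)..τ, α s * nu γ s := by
      rw [intervalIntegral.integral_const_mul]

theorem nu_mul_le_add (hsol : IsDelaySolution τ p γ α h) (hτ : 0 ≤ τ) (hp : 0 ≤ p)
    (hγ : Continuous γ) (hαc : Continuous α) (hα : ∀ t, 0 ≤ α t)
    (hint : IntegrableOn (fun ξ => α ξ * sig γ τ ξ ^ p * nu γ ξ ^ (1 - p)) (Ici τ))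
    {B t : ℝ} (hB : 0 ≤ B) (ht : τ ≤ t) (hyB : ∀ s ∈ Icc 0 (t - τ), nu γ s * h s ≤ B) :
    nu γ t * h t ≤
      nu γ τ * h τ + B ^ p * ∫ ξ in Ici τ, α ξ * sig γ τ ξ ^ p * nu γ ξ ^ (1 - p) := by
  have hw : ∀ s ∈ Icc τ t, α s * nu γ s * h (s - τ) ^ p ≤
      B ^ p * (α s * sig γ τ s ^ p * nu γ s ^ (1 - p)) := by
    intro s hs
    have hν := nu_pos γ (s - τ)
    have hhB : h (s - τ) ≤ B / nu γ (s - τ) := by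
      rw [le_div_iff₀ hν, mul_comm]
      exact hyB _ ⟨by linarith [hs.1], by linarith [hs.2]⟩
    have hpow := rpow_le_rpow (hsol.nonneg _ (by linarith [hs.1])) hhB hp
    rw [div_rpow hB hν.le] at hpow
    calc α s * nu γ s * h (s - τ) ^ p
        ≤ α s * nu γ s * (B ^ p / nu γ (s - τ) ^ p) :=
          mul_le_mul_of_nonneg_left hpow (mul_nonneg (hα s) (nu_pos γ s).le)
      _ = B ^ p * (α s * (nu γ s / nu γ (s - τ) ^ p)) := by ring
      _ = B ^ p * (α s * sig γ τ s ^ p * nu γ s ^ (1 - p)) := by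
        rw [nu_div_nu_sub_rpow hγ]; ring
  calc nu γ t * h t = nu γ τ * h τ + ∫ s in τ..t, α s * nu γ s * h (s - τ) ^ p := by
        linarith [hsol.nu_mul_sub_nu_mul hτ hp hγ hαc hτ ht]
    _ ≤ nu γ τ * h τ + ∫ s in τ..t, B ^ p * (α s * sig γ τ s ^ p * nu γ s ^ (1 - p)) := by
        gcongr
        exact intervalIntegral.integral_mono_on ht
          (((hsol.continuousOn_delay_term hp hγ hαc).mono
            fun s hs => hτ.trans hs.1).intervalIntegrable_of_Icc ht)
          (((intervalIntegrable_iff_integrableOn_Icc_of_le ht).2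
            (hint.mono_set Icc_subset_Ici_self)).const_mul _) hw
    _ ≤ nu γ τ * h τ + B ^ p * ∫ ξ in Ici τ, α ξ * sig γ τ ξ ^ p * nu γ ξ ^ (1 - p) := by
        rw [intervalIntegral.integral_const_mul, intervalIntegral.integral_of_le ht]
        gcongr
        · exact ae_of_all _ (mul_sig_rpow_mul_nu_rpow_nonneg hα τ p)
        · exact Ioc_subset_Ioi_self.trans Ioi_subset_Ici_self

theorem nu_mul_lt (hsol : IsDelaySolution τ p γ α h) (hτ : 0 < τ) (hp : 0 ≤ p)
    (hγ : Continuous γ) (hαc : Continuous α) (hα : ∀ t, 0 ≤ α t)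
    (hint : IntegrableOn (fun ξ => α ξ * sig γ τ ξ ^ p * nu γ ξ ^ (1 - p)) (Ici τ))
    {δ B : ℝ} (hB : 0 ≤ B) (hδ : ∀ t ∈ Icc (-τ) 0, h t ≤ δ)
    (hδB : δ + δ ^ p * (∫ s in (0:ℝ)..τ, α s * nu γ s) +
      B ^ p * (∫ ξ in Ici τ, α ξ * sig γ τ ξ ^ p * nu γ ξ ^ (1 - p)) < B) :
    ∀ t, 0 ≤ t → nu γ t * h t < B := by
  have hI : 0 ≤ B ^ p * ∫ ξ in Ici τ, α ξ * sig γ τ ξ ^ p * nu γ ξ ^ (1 - p) :=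
    mul_nonneg (rpow_nonneg hB p) <| setIntegral_nonneg measurableSet_Ici fun ξ _ =>
      mul_sig_rpow_mul_nu_rpow_nonneg hα τ p ξ
  have hearly : ∀ t ∈ Icc 0 τ, nu γ t * h t < B := fun t ht =>
    (hsol.nu_mul_le_of_le_on_Icc hτ.le hp hγ hαc hα hδ ht).trans_lt (by linarith)
  have hτB := hsol.nu_mul_le_of_le_on_Icc hτ.le hp hγ hαc hα hδ (right_mem_Icc.2 hτ.le)
  have hlate : ∀ t, τ ≤ t → nu γ t * h t < B := by
    refine ContinuousOn.forall_lt_of_bootstrap ((continuous_nu hγ).continuousOn.mul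
      (hsol.continuousOn.mono (Ici_subset_Ici.2 (by linarith)))) fun t ht hyB => ?_
    have hyB' : ∀ s ∈ Icc 0 (t - τ), nu γ s * h s ≤ B := by
      intro s hs
      rcases le_or_gt s τ with hsτ | hsτ
      · exact (hearly s ⟨hs.1, hsτ⟩).le
      · exact hyB s ⟨hsτ.le, by linarith [hs.2]⟩
    linarith [hsol.nu_mul_le_add hτ.le hp hγ hαc hα hint hB ht hyB']
  intro t ht
  rcases le_or_gt t τ with htτ | htτ
  exacts [hearly t ⟨ht, htτ⟩, hlate t htτ.le]

end IsDelaySolution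

theorem exists_pos_forall_nu_mul_lt {τ p : ℝ} {γ α : ℝ → ℝ} (hτ : 0 < τ) (hp : 1 < p)
    (hγ : Continuous γ) (hαc : Continuous α) (hα : ∀ t, 0 ≤ α t)
    (hint : IntegrableOn (fun ξ => α ξ * sig γ τ ξ ^ p * nu γ ξ ^ (1 - p)) (Ici τ))
    {ε : ℝ} (hε : 0 < ε) :
    ∃ δ > 0, ∀ h, IsDelaySolution τ p γ α h → (∀ t ∈ Icc (-τ) 0, h t ≤ δ) →
      ∀ t, 0 ≤ t → nu γ t * h t < ε := by
  set I := ∫ ξ in Ici τ, α ξ * sig γ τ ξ ^ p * nu γ ξ ^ (1 - p)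
  set C := ∫ s in (0:ℝ)..τ, α s * nu γ s
  -- `B ^ p * I = B * (B ^ (p - 1) * I)` is `o(B)` because `p > 1`
  have hBsmall : ∀ᶠ B in 𝓝[>] 0, B ∈ Ioo 0 ε ∧ B ^ (p - 1) * I < 1 / 2 := by
    refine Eventually.and (Ioo_mem_nhdsGT hε) (nhdsWithin_le_nhds ?_)
    have hlim : Tendsto (fun B : ℝ => B ^ (p - 1) * I) (𝓝 0) (𝓝 0) := by
      simpa [zero_rpow (by linarith : p - 1 ≠ 0)] using
        (continuousAt_rpow_const 0 (p - 1) (Or.inr (by linarith))).tendsto.mul_const I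
    exact hlim.eventually_lt_const (by norm_num)
  obtain ⟨B, ⟨hB0, hBε⟩, hBI⟩ := hBsmall.exists
  have hδsmall : ∀ᶠ δ in 𝓝[>] 0, δ ∈ Ioi 0 ∧ δ + δ ^ p * C < B / 2 := by
    refine Eventually.and self_mem_nhdsWithin (nhdsWithin_le_nhds ?_)
    have hlim : Tendsto (fun δ : ℝ => δ + δ ^ p * C) (𝓝 0) (𝓝 0) := by
      simpa [zero_rpow (by linarith : p ≠ 0)] using
        tendsto_id.add ((continuousAt_rpow_const 0 p (Or.inr (by linarith))).tendsto.mul_const C)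
    exact hlim.eventually_lt_const (half_pos hB0)
  obtain ⟨δ, hδ0, hδB⟩ := hδsmall.exists
  have hBp : B ^ p * I < B / 2 := by
    have hsplit : B ^ p = B * B ^ (p - 1) := by
      rw [rpow_sub_one hB0.ne', mul_div_cancel₀ _ hB0.ne']
    rw [hsplit, mul_assoc]
    linarith [mul_lt_mul_of_pos_left hBI hB0]
  exact ⟨δ, hδ0, fun h hsol hδ t ht =>
    (hsol.nu_mul_lt hτ (by linarith) hγ hαc hα hint hB0.le hδ (by linarith) t ht).trans hBε⟩

/-- Corollary 2.9 (Corollary 2), Lyapunov stability of the zero solution for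
the case `f = 0`: under (68) and (80), for every `ε > 0` there is `δ > 0` such
that every solution with `‖u‖ ≤ δ` on `[−τ,0]` satisfies `‖u‖ ≤ ε` on `[0,∞)`. -/
theorem stmt_18
    {H : Type*} [NormedAddCommGroup H] [InnerProductSpace ℂ H]
    (τ p : ℝ) (hτ : 0 < τ) (hp : 1 < p)
    (γ α : ℝ → ℝ)
    (hγc : Continuous γ) (hαc : Continuous α)
    (hα : ∀ t, 0 ≤ α t)
    (hint : IntegrableOn (fun ξ => α ξ * sig γ τ ξ ^ p * nu γ ξ ^ (1 - p)) (Ici τ))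
    (hM : BddAbove {x : ℝ | ∃ t, 0 ≤ t ∧ x = ∫ ξ in (0:ℝ)..t, γ ξ}) :
    ∀ ε : ℝ, 0 < ε → ∃ δ : ℝ, 0 < δ ∧
      ∀ (u u' : ℝ → H) (h h' : ℝ → ℝ),
        ContinuousOn u (Ici (-τ)) →
        (∀ t, 0 ≤ t → HasDerivWithinAt u (u' t) (Ici (0:ℝ)) t) →
        (∀ t, 0 ≤ t → DifferentiableWithinAt ℝ (fun s => ‖u s‖) (Ici (0:ℝ)) t) →
        (∀ t, 0 ≤ t → (⟪u t, u' t⟫).re ≤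
          γ t * ‖u t‖ ^ 2 + α t * ‖u t‖ * ‖u (t - τ)‖ ^ p) →
        (∀ t, -τ ≤ t → 0 ≤ h t) →
        ContinuousOn h (Ici (-τ)) →
        (∀ t, 0 ≤ t → HasDerivWithinAt h (h' t) (Ici (0:ℝ)) t) →
        (∀ t, 0 ≤ t → h' t = γ t * h t + α t * h (t - τ) ^ p) →
        (∀ t, -τ ≤ t → t ≤ 0 → h t = ‖u t‖) →
        (∀ t ∈ Icc (-τ) (0:ℝ), ‖u t‖ ≤ δ) →
        ∀ t, 0 ≤ t → ‖u t‖ ≤ ε := by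
  intro ε hε
  obtain ⟨M, hM⟩ := hM
  obtain ⟨δ, hδ0, hδ⟩ :=
    exists_pos_forall_nu_mul_lt hτ hp hγc hαc hα hint (mul_pos hε (exp_pos (-M)))
  refine ⟨δ, hδ0, fun u u' h h' hu hu' hnd hineq hh0 hhc hh' hheq hic hδu t ht => ?_⟩
  have hsol : IsDelaySolution τ p γ α h := ⟨hh0, hhc, fun t ht => hheq t ht ▸ hh' t ht⟩
  have hsub : ∀ t, 0 ≤ t → 0 < ‖u t‖ →
      derivWithin (‖u ·‖) (Ici 0) t ≤ γ t * ‖u t‖ + α t * ‖u (t - τ)‖ ^ p := by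
    intro t ht hpos
    have hre := (hu' t ht).norm_mul_eq_re_inner (hnd t ht).hasDerivWithinAt
      (uniqueDiffOn_Ici 0 t ht)
    refine le_of_mul_le_mul_left ?_ hpos
    linarith [hineq t ht]
  have hcomp := hsol.le_of_subsolution hτ (by linarith) hγc hα (fun _ => norm_nonneg _)
    (hu.norm.mono (Ici_subset_Ici.2 (by linarith))) (fun t ht => (hnd t ht).hasDerivWithinAt)
    hsub (fun t ht ht0 => (hic t ht ht0).ge) t (by linarith)
  have hνh := hδ h hsol (fun s hs => hic s hs.1 hs.2 ▸ hδu s hs) t ht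
  have hν := exp_neg_le_nu (fun s hs => hM ⟨s, hs, rfl⟩) ht
  refine hcomp.trans (le_of_mul_le_mul_left ?_ (nu_pos γ t))
  calc nu γ t * h t ≤ ε * exp (-M) := hνh.le
    _ ≤ ε * nu γ t := by gcongr
    _ = nu γ t * ε := mul_comm _ _
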